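/- Assume the Main Assumption. Then there exist constants c̲ > 0 and c̄ > 0 such that for every W ∈ 𝒞₀, c̲ ‖W_sh − W‖²_{L²(ℝ)} ≤ ℒ_#(W) ≤ c̄ ‖W_sh − W‖²_{L²(ℝ)}, where ℒ_#(W) = ∫_ℝ g_Φ(W(φ)) dφ. -/

import Mathlib

open MeasureTheory Filter Topology

/-- The shock profile connecting `-1` to `1`. -/
noncomputable def Wsh : ℝ → ℝ := fun φ => if 0 ≤ φ then 1 else -1

/-- The set `𝒞` of monotone heteroclinic profiles. -/
def inC (W : ℝ → ℝ) : Prop :=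
  Monotone W ∧ MemLp (fun φ => Wsh φ - W φ) 2 (volume : Measure ℝ) ∧
  Tendsto W atBot (𝓝 (-1 : ℝ)) ∧ Tendsto W atTop (𝓝 (1 : ℝ))

/-- The set `𝒞₀` of pinned profiles. -/
def inC0 (W : ℝ → ℝ) : Prop :=
  inC W ∧ (∀ φ : ℝ, 0 ≤ φ → W φ ∈ Set.Icc (0 : ℝ) 1) ∧
  (∀ φ : ℝ, φ < 0 → W φ ∈ Set.Icc (-1 : ℝ) 0)

/-- The signed area function `g_Φ`. -/
noncomputable def gPhi (Φ : ℝ → ℝ) (w : ℝ) : ℝ := Φ (-1) - Φ w + w ^ 2 / 2 - 1 / 2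

section Aux

variable {Φ : ℝ → ℝ}

lemma aux_diff (hΦ : ContDiff ℝ 2 Φ) :
    Differentiable ℝ Φ ∧ Differentiable ℝ (deriv Φ) ∧ Continuous (deriv (deriv Φ)) := by
  have h2 : ContDiff ℝ 1 (deriv Φ) := by
    have := (contDiff_succ_iff_deriv (n := 1)).mp (by exact_mod_cast hΦ)
    exact this.2.2
  have := contDiff_one_iff_deriv.mp h2
  exact ⟨hΦ.differentiable (by norm_num), this.1, this.2⟩

lemma aux_hasDerivAt_gPhi (hΦd : Differentiable ℝ Φ) (w : ℝ) :
    HasDerivAt (gPhi Φ) (w - deriv Φ w) w := by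
  have h1 : HasDerivAt (fun w : ℝ => Φ (-1) - Φ w + w ^ 2 / 2 - 1 / 2)
      (0 - deriv Φ w + (2:ℕ) * w ^ 1 / 2 - 0) w :=
    (((hasDerivAt_const w (Φ (-1))).sub (hΦd w).hasDerivAt).add
      ((hasDerivAt_pow 2 w).div_const 2)).sub (hasDerivAt_const w (1/2 : ℝ))
  convert h1 using 1
  · rfl
  push_cast; ring

lemma aux_phi'_mono (hΦ : ContDiff ℝ 2 Φ)
    (hC : ∀ w ∈ Set.Icc (-1 : ℝ) 1, 0 ≤ deriv (deriv Φ) w) :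
    MonotoneOn (deriv Φ) (Set.Icc (-1 : ℝ) 1) := by
  obtain ⟨_, h1, h2⟩ := aux_diff hΦ
  refine monotoneOn_of_deriv_nonneg (convex_Icc _ _) h1.continuous.continuousOn
    h1.differentiableOn ?_
  intro x hx
  rw [interior_Icc] at hx
  exact hC x ⟨hx.1.le, hx.2.le⟩

/-- Upper bound near the right state. -/
lemma aux_upper_right (hΦ : ContDiff ℝ 2 Φ) (hN2 : deriv Φ 1 = 1)
    (hC : ∀ w ∈ Set.Icc (-1 : ℝ) 1, 0 ≤ deriv (deriv Φ) w) (hE : Φ (-1) = Φ 1) :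
    ∀ w ∈ Set.Icc (0 : ℝ) 1, gPhi Φ w ≤ (1 / 2) * (1 - w) ^ 2 := by
  obtain ⟨hd, _, _⟩ := aux_diff hΦ
  have hmono := aux_phi'_mono hΦ hC
  have hanti : AntitoneOn (fun w => Φ w - w) (Set.Icc (-1 : ℝ) 1) := by
    refine antitoneOn_of_deriv_nonpos (convex_Icc _ _)
      ((hd.continuous.sub continuous_id).continuousOn)
      ((hd.sub differentiable_id).differentiableOn) ?_
    intro x hx
    rw [interior_Icc] at hx
    have hdx : deriv (fun w => Φ w - w) x = deriv Φ x - 1 :=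
      ((hd x).hasDerivAt.sub (hasDerivAt_id x)).deriv
    rw [hdx, sub_nonpos]
    calc deriv Φ x ≤ deriv Φ 1 := hmono ⟨hx.1.le, hx.2.le⟩ (by norm_num) hx.2.le
    _ = 1 := hN2
  intro w hw
  have h1 : (fun w => Φ w - w) 1 ≤ (fun w => Φ w - w) w :=
    hanti ⟨by linarith [hw.1], hw.2⟩ (by norm_num) hw.2
  simp only at h1
  simp only [gPhi, hE]
  nlinarith [h1]

/-- Upper bound near the left state. -/
lemma aux_upper_left (hΦ : ContDiff ℝ 2 Φ) (hN1 : deriv Φ (-1) = -1)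
    (hC : ∀ w ∈ Set.Icc (-1 : ℝ) 1, 0 ≤ deriv (deriv Φ) w) :
    ∀ w ∈ Set.Icc (-1 : ℝ) 0, gPhi Φ w ≤ (1 / 2) * (1 + w) ^ 2 := by
  obtain ⟨hd, _, _⟩ := aux_diff hΦ
  have hmono := aux_phi'_mono hΦ hC
  have hmon : MonotoneOn (fun w => Φ w + w) (Set.Icc (-1 : ℝ) 1) := by
    refine monotoneOn_of_deriv_nonneg (convex_Icc _ _)
      ((hd.continuous.add continuous_id).continuousOn)
      ((hd.add differentiable_id).differentiableOn) ?_
    intro x hx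
    rw [interior_Icc] at hx
    have hdx : deriv (fun w => Φ w + w) x = deriv Φ x + 1 :=
      ((hd x).hasDerivAt.add (hasDerivAt_id x)).deriv
    rw [hdx]
    have : deriv Φ (-1) ≤ deriv Φ x := hmono (by norm_num) ⟨hx.1.le, hx.2.le⟩ hx.1.le
    rw [hN1] at this
    linarith
  intro w hw
  have h1 : (fun w => Φ w + w) (-1) ≤ (fun w => Φ w + w) w :=
    hmon (by norm_num) ⟨hw.1, by linarith [hw.2]⟩ hw.1
  simp only at h1
  simp only [gPhi]
  nlinarith [h1]

/-- Lower bound on the right half. -/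
lemma aux_lower_right (hΦ : ContDiff ℝ 2 Φ) (hN2 : deriv Φ 1 = 1)
    (hE : Φ (-1) = Φ 1) (hS2 : deriv (deriv Φ) 1 < 1)
    (hA : ∀ w ∈ Set.Ioo (-1 : ℝ) 1, 0 < gPhi Φ w) :
    ∃ c > (0 : ℝ), ∀ w ∈ Set.Icc (0 : ℝ) 1, c * (1 - w) ^ 2 ≤ gPhi Φ w := by
  obtain ⟨hd, hd', hc''⟩ := aux_diff hΦ
  set ε : ℝ := (1 - deriv (deriv Φ) 1) / 2 with hε
  have hεpos : 0 < ε := by simp only [hε]; linarith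
  -- neighborhood where Φ'' < 1 - ε
  have hopen : IsOpen {t : ℝ | deriv (deriv Φ) t < 1 - ε} := isOpen_lt hc'' continuous_const
  have hmem1 : (1 : ℝ) ∈ {t : ℝ | deriv (deriv Φ) t < 1 - ε} := by
    simp only [Set.mem_setOf_eq, hε]; linarith
  obtain ⟨δ, hδpos, hball⟩ := Metric.isOpen_iff.mp hopen 1 hmem1
  set δ' : ℝ := min (δ / 2) (1 / 2) with hδ'
  have hδ'pos : 0 < δ' := lt_min (by linarith) (by norm_num)
  have hδ'le : δ' ≤ 1 / 2 := min_le_right _ _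
  have hsub : ∀ t : ℝ, 1 - δ' ≤ t → t ≤ 1 → deriv (deriv Φ) t < 1 - ε := by
    intro t ht1 ht2
    have : t ∈ Metric.ball (1 : ℝ) δ := by
      rw [Metric.mem_ball, Real.dist_eq, abs_lt]
      constructor <;> linarith [min_le_left (δ/2) (1/2:ℝ)]
    exact hball this
  -- r := Φ' t - t - ε (1 - t) is antitone on [1-δ',1], with r 1 = 0, so r ≥ 0 there
  have hr : ∀ t ∈ Set.Icc (1 - δ') 1, 0 ≤ deriv Φ t - t - ε * (1 - t) := by
    have hanti : AntitoneOn (fun t => deriv Φ t - t - ε * (1 - t)) (Set.Icc (1 - δ') 1) := by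
      refine antitoneOn_of_deriv_nonpos (convex_Icc _ _) ?_ ?_ ?_
      · exact ((hd'.continuous.sub continuous_id).sub
          (continuous_const.mul (continuous_const.sub continuous_id))).continuousOn
      · exact ((hd'.sub differentiable_id).sub
          ((differentiable_const _).sub differentiable_id |>.const_mul ε)).differentiableOn
      · intro x hx
        rw [interior_Icc] at hx
        have hdx : HasDerivAt (fun t => deriv Φ t - t - ε * (1 - t))
            (deriv (deriv Φ) x - 1 - ε * (0 - 1)) x :=
          ((hd' x).hasDerivAt.sub (hasDerivAt_id x)).sub
            (((hasDerivAt_const x (1:ℝ)).sub (hasDerivAt_id x)).const_mul ε)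
        rw [hdx.deriv]
        have := hsub x hx.1.le hx.2.le
        nlinarith
    intro t ht
    have := hanti ht (Set.right_mem_Icc.mpr (by linarith)) ht.2
    simp only [hN2] at this
    simpa using by linarith [this]
  -- s := gPhi - (ε/2)(1-w)² is antitone on [1-δ',1], with s 1 = 0
  have hmain : ∀ w ∈ Set.Icc (1 - δ') 1, ε / 2 * (1 - w) ^ 2 ≤ gPhi Φ w := by
    have hanti : AntitoneOn (fun w => gPhi Φ w - ε / 2 * (1 - w) ^ 2) (Set.Icc (1 - δ') 1) := by
      have hgd : ∀ x : ℝ, HasDerivAt (fun w => gPhi Φ w - ε / 2 * (1 - w) ^ 2)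
          ((x - deriv Φ x) - ε / 2 * ((2:ℕ) * (1 - x) ^ 1 * (0 - 1))) x := by
        intro x
        exact (aux_hasDerivAt_gPhi hd x).sub
          ((((hasDerivAt_const x (1:ℝ)).sub (hasDerivAt_id x)).pow 2).const_mul (ε / 2))
      refine antitoneOn_of_deriv_nonpos (convex_Icc _ _) ?_ ?_ ?_
      · exact Continuous.continuousOn (by
          have : Continuous (gPhi Φ) := by
            unfold gPhi
            exact (continuous_const.sub hd.continuous).add
              ((continuous_pow 2).div_const 2) |>.sub continuous_const
          fun_prop)
      · exact fun x hx => ((hgd x).differentiableAt).differentiableWithinAt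
      · intro x hx
        rw [interior_Icc] at hx
        rw [(hgd x).deriv]
        have := hr x ⟨hx.1.le, hx.2.le⟩
        push_cast
        nlinarith
    intro w hw
    have h1 := hanti hw (Set.right_mem_Icc.mpr (by linarith)) hw.2
    have hg1 : gPhi Φ 1 = 0 := by simp [gPhi, hE]
    simp only [hg1] at h1
    nlinarith [h1]
  -- compact piece [0, 1-δ']
  have hgc : Continuous (gPhi Φ) := by
    unfold gPhi
    exact ((continuous_const.sub hd.continuous).add ((continuous_pow 2).div_const 2)).sub
      continuous_const
  have hne : (Set.Icc (0:ℝ) (1 - δ')).Nonempty := ⟨0, by constructor <;> [rfl; linarith]⟩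
  obtain ⟨x0, hx0mem, hx0min⟩ := isCompact_Icc.exists_isMinOn hne hgc.continuousOn
  have hmpos : 0 < gPhi Φ x0 := hA x0 ⟨by linarith [hx0mem.1], by linarith [hx0mem.2]⟩
  refine ⟨min (ε / 2) (gPhi Φ x0), lt_min (by linarith) hmpos, ?_⟩
  intro w hw
  rcases le_or_gt w (1 - δ') with h | h
  · have h1 : (1 - w) ^ 2 ≤ 1 := by nlinarith [hw.1, hw.2]
    have h2 : gPhi Φ x0 ≤ gPhi Φ w := hx0min ⟨hw.1, h⟩
    have h3 : min (ε / 2) (gPhi Φ x0) ≤ gPhi Φ x0 := min_le_right _ _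
    nlinarith [min_le_right (ε/2) (gPhi Φ x0), lt_min (show (0:ℝ) < ε/2 by linarith) hmpos]
  · have := hmain w ⟨h.le, hw.2⟩
    have h3 : min (ε / 2) (gPhi Φ x0) ≤ ε / 2 := min_le_left _ _
    nlinarith [sq_nonneg (1 - w)]

/-- Lower bound on the left half. -/
lemma aux_lower_left (hΦ : ContDiff ℝ 2 Φ) (hN1 : deriv Φ (-1) = -1)
    (hS1 : deriv (deriv Φ) (-1) < 1)
    (hA : ∀ w ∈ Set.Ioo (-1 : ℝ) 1, 0 < gPhi Φ w) :
    ∃ c > (0 : ℝ), ∀ w ∈ Set.Icc (-1 : ℝ) 0, c * (1 + w) ^ 2 ≤ gPhi Φ w := by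
  obtain ⟨hd, hd', hc''⟩ := aux_diff hΦ
  set ε : ℝ := (1 - deriv (deriv Φ) (-1)) / 2 with hε
  have hεpos : 0 < ε := by simp only [hε]; linarith
  have hopen : IsOpen {t : ℝ | deriv (deriv Φ) t < 1 - ε} := isOpen_lt hc'' continuous_const
  have hmem1 : (-1 : ℝ) ∈ {t : ℝ | deriv (deriv Φ) t < 1 - ε} := by
    simp only [Set.mem_setOf_eq, hε]; linarith
  obtain ⟨δ, hδpos, hball⟩ := Metric.isOpen_iff.mp hopen (-1) hmem1
  set δ' : ℝ := min (δ / 2) (1 / 2) with hδ'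
  have hδ'pos : 0 < δ' := lt_min (by linarith) (by norm_num)
  have hδ'le : δ' ≤ 1 / 2 := min_le_right _ _
  have hsub : ∀ t : ℝ, -1 ≤ t → t ≤ -1 + δ' → deriv (deriv Φ) t < 1 - ε := by
    intro t ht1 ht2
    have : t ∈ Metric.ball (-1 : ℝ) δ := by
      rw [Metric.mem_ball, Real.dist_eq, abs_lt]
      constructor <;> linarith [min_le_left (δ/2) (1/2:ℝ)]
    exact hball this
  -- r := - Φ' t + t - ε (1 + t) is monotone on [-1,-1+δ'], with r (-1) = 0, so r ≥ 0 there
  have hr : ∀ t ∈ Set.Icc (-1 : ℝ) (-1 + δ'), 0 ≤ -deriv Φ t + t - ε * (1 + t) := by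
    have hmon : MonotoneOn (fun t => -deriv Φ t + t - ε * (1 + t)) (Set.Icc (-1 : ℝ) (-1 + δ')) := by
      refine monotoneOn_of_deriv_nonneg (convex_Icc _ _) ?_ ?_ ?_
      · exact ((hd'.continuous.neg.add continuous_id).sub
          (continuous_const.mul (continuous_const.add continuous_id))).continuousOn
      · exact ((hd'.neg.add differentiable_id).sub
          (((differentiable_const (1:ℝ)).add differentiable_id).const_mul ε)).differentiableOn
      · intro x hx
        rw [interior_Icc] at hx
        have hdx : HasDerivAt (fun t => -deriv Φ t + t - ε * (1 + t))
            (-(deriv (deriv Φ) x) + 1 - ε * (0 + 1)) x :=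
          (((hd' x).hasDerivAt.neg).add (hasDerivAt_id x)).sub
            (((hasDerivAt_const x (1:ℝ)).add (hasDerivAt_id x)).const_mul ε)
        rw [hdx.deriv]
        have := hsub x hx.1.le hx.2.le
        nlinarith
    intro t ht
    have := hmon (Set.left_mem_Icc.mpr (by linarith)) ht ht.1
    simp only [hN1] at this
    simpa using by linarith [this]
  -- s := gPhi - (ε/2)(1+w)² is monotone on [-1,-1+δ'], with s (-1) = 0
  have hmain : ∀ w ∈ Set.Icc (-1 : ℝ) (-1 + δ'), ε / 2 * (1 + w) ^ 2 ≤ gPhi Φ w := by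
    have hmon : MonotoneOn (fun w => gPhi Φ w - ε / 2 * (1 + w) ^ 2)
        (Set.Icc (-1 : ℝ) (-1 + δ')) := by
      have hgd : ∀ x : ℝ, HasDerivAt (fun w => gPhi Φ w - ε / 2 * (1 + w) ^ 2)
          ((x - deriv Φ x) - ε / 2 * ((2:ℕ) * (1 + x) ^ 1 * (0 + 1))) x := by
        intro x
        exact (aux_hasDerivAt_gPhi hd x).sub
          ((((hasDerivAt_const x (1:ℝ)).add (hasDerivAt_id x)).pow 2).const_mul (ε / 2))
      refine monotoneOn_of_deriv_nonneg (convex_Icc _ _) ?_ ?_ ?_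
      · have : Continuous (gPhi Φ) := by
          unfold gPhi
          exact ((continuous_const.sub hd.continuous).add ((continuous_pow 2).div_const 2)).sub
            continuous_const
        exact Continuous.continuousOn (by fun_prop)
      · exact fun x hx => ((hgd x).differentiableAt).differentiableWithinAt
      · intro x hx
        rw [interior_Icc] at hx
        rw [(hgd x).deriv]
        have := hr x ⟨hx.1.le, hx.2.le⟩
        push_cast
        nlinarith
    intro w hw
    have h1 := hmon (Set.left_mem_Icc.mpr (by linarith)) hw hw.1
    have hg1 : gPhi Φ (-1) = 0 := by norm_num [gPhi]
    simp only [hg1] at h1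
    nlinarith [h1]
  -- compact piece [-1+δ', 0]
  have hgc : Continuous (gPhi Φ) := by
    unfold gPhi
    exact ((continuous_const.sub hd.continuous).add ((continuous_pow 2).div_const 2)).sub
      continuous_const
  have hne : (Set.Icc (-1 + δ') (0:ℝ)).Nonempty := ⟨0, by constructor <;> [linarith; rfl]⟩
  obtain ⟨x0, hx0mem, hx0min⟩ := isCompact_Icc.exists_isMinOn hne hgc.continuousOn
  have hmpos : 0 < gPhi Φ x0 := hA x0 ⟨by linarith [hx0mem.1], by linarith [hx0mem.2]⟩
  refine ⟨min (ε / 2) (gPhi Φ x0), lt_min (by linarith) hmpos, ?_⟩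
  intro w hw
  rcases le_or_gt (-1 + δ') w with h | h
  · have h1 : (1 + w) ^ 2 ≤ 1 := by nlinarith [hw.1, hw.2]
    have h2 : gPhi Φ x0 ≤ gPhi Φ w := hx0min ⟨h, hw.2⟩
    nlinarith [min_le_right (ε/2) (gPhi Φ x0), lt_min (show (0:ℝ) < ε/2 by linarith) hmpos]
  · have := hmain w ⟨hw.1, h.le⟩
    have h3 : min (ε / 2) (gPhi Φ x0) ≤ ε / 2 := min_le_left _ _
    nlinarith [sq_nonneg (1 + w)]

end Aux

theorem reduced_action_two_sided_bounds
    (Φ : ℝ → ℝ) (hΦ : ContDiff ℝ 2 Φ)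
    (hN1 : deriv Φ (-1) = -1) (hN2 : deriv Φ 1 = 1)
    (hC : ∀ w ∈ Set.Icc (-1 : ℝ) 1, 0 ≤ deriv (deriv Φ) w)
    (hE : Φ (-1) = Φ 1)
    (hS1 : deriv (deriv Φ) (-1) < 1) (hS2 : deriv (deriv Φ) 1 < 1)
    (hA : ∀ w ∈ Set.Ioo (-1 : ℝ) 1, 0 < gPhi Φ w) :
    ∃ clow > (0 : ℝ), ∃ cup > (0 : ℝ), ∀ W : ℝ → ℝ, inC0 W →
      clow * (∫ φ, (Wsh φ - W φ) ^ 2) ≤ (∫ φ, gPhi Φ (W φ)) ∧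
      (∫ φ, gPhi Φ (W φ)) ≤ cup * (∫ φ, (Wsh φ - W φ) ^ 2) := by
  obtain ⟨c1, hc1, hlow1⟩ := aux_lower_right hΦ hN2 hE hS2 hA
  obtain ⟨c2, hc2, hlow2⟩ := aux_lower_left hΦ hN1 hS1 hA
  have hub1 := aux_upper_right hΦ hN2 hC hE
  have hub2 := aux_upper_left hΦ hN1 hC
  refine ⟨min c1 c2, lt_min hc1 hc2, 1/2, by norm_num, ?_⟩
  intro W hW
  obtain ⟨⟨hmono, hmem, _, _⟩, hposW, hnegW⟩ := hW
  have hd : Differentiable ℝ Φ := hΦ.differentiable (by norm_num)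
  -- pointwise bounds
  have hub : ∀ φ, gPhi Φ (W φ) ≤ 1/2 * (Wsh φ - W φ) ^ 2 := by
    intro φ
    by_cases hφ : 0 ≤ φ
    · have h1 : Wsh φ = 1 := by simp [Wsh, hφ]
      have := hub1 (W φ) (hposW φ hφ)
      rw [h1]; linarith
    · have h1 : Wsh φ = -1 := by simp [Wsh, hφ]
      have := hub2 (W φ) (hnegW φ (lt_of_not_ge hφ))
      rw [h1]
      have heq : (-1 - W φ) ^ 2 = (1 + W φ) ^ 2 := by ring
      rw [heq]; linarith
  have hlb : ∀ φ, min c1 c2 * (Wsh φ - W φ) ^ 2 ≤ gPhi Φ (W φ) := by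
    intro φ
    by_cases hφ : 0 ≤ φ
    · have h1 : Wsh φ = 1 := by simp [Wsh, hφ]
      have h2 := hlow1 (W φ) (hposW φ hφ)
      rw [h1]
      calc min c1 c2 * (1 - W φ) ^ 2 ≤ c1 * (1 - W φ) ^ 2 :=
            mul_le_mul_of_nonneg_right (min_le_left _ _) (sq_nonneg _)
        _ ≤ gPhi Φ (W φ) := h2
    · have h1 : Wsh φ = -1 := by simp [Wsh, hφ]
      have h2 := hlow2 (W φ) (hnegW φ (lt_of_not_ge hφ))
      rw [h1]
      have heq : (-1 - W φ) ^ 2 = (1 + W φ) ^ 2 := by ring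
      rw [heq]
      calc min c1 c2 * (1 + W φ) ^ 2 ≤ c2 * (1 + W φ) ^ 2 :=
            mul_le_mul_of_nonneg_right (min_le_right _ _) (sq_nonneg _)
        _ ≤ gPhi Φ (W φ) := h2
  have hg0 : ∀ φ, 0 ≤ gPhi Φ (W φ) := by
    intro φ
    have := hlb φ
    nlinarith [sq_nonneg (Wsh φ - W φ), lt_min hc1 hc2]
  -- integrability
  have hf2 : Integrable (fun φ => (Wsh φ - W φ) ^ 2) := hmem.integrable_sq
  have hgcont : Continuous (gPhi Φ) := by
    unfold gPhi
    exact ((continuous_const.sub hd.continuous).add ((continuous_pow 2).div_const 2)).sub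
      continuous_const
  have hgm : AEStronglyMeasurable (fun φ => gPhi Φ (W φ)) volume :=
    (hgcont.measurable.comp hmono.measurable).aestronglyMeasurable
  have hgint : Integrable (fun φ => gPhi Φ (W φ)) := by
    refine (hf2.const_mul (1/2)).mono' hgm ?_
    filter_upwards with φ
    rw [Real.norm_eq_abs, abs_of_nonneg (hg0 φ)]
    exact hub φ
  constructor
  · calc min c1 c2 * ∫ φ, (Wsh φ - W φ) ^ 2
        = ∫ φ, min c1 c2 * (Wsh φ - W φ) ^ 2 := (integral_const_mul _ _).symm
      _ ≤ ∫ φ, gPhi Φ (W φ) := integral_mono (hf2.const_mul _) hgint hlb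
  · calc (∫ φ, gPhi Φ (W φ))
        ≤ ∫ φ, 1/2 * (Wsh φ - W φ) ^ 2 := integral_mono hgint (hf2.const_mul _) hub
      _ = 1/2 * ∫ φ, (Wsh φ - W φ) ^ 2 := integral_const_mul _ _
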